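/- Define the structurally recursive normalization function enf from types (generated by τ ::= χᵢ | τ→σ | τ×σ | τ+σ) into the grammar ENF (e ::= c | d; d ::= c₁+(⋯+cₙ) with n≥2; c ::= (c₁→b₁)×(⋯×(cₙ→bₙ)) with n≥0; b ::= p | d) by: enf(χ) is the singleton product (1→χ) (identified with χ); enf(τ+σ) is the flattened n-ary sum of enf(τ) and enf(σ); enf(τ×σ) distributes products over sums and flattens products; enf(τ→σ) applies the exponential rules f^(g+h) ⇝ f^g·f^h, (f·g)^h ⇝ f^h·g^h, (f^g)^h ⇝ f^(h·g) recursively. Then for every valuation v assigning a positive natural number to each atomic type, the arithmetic interpretation of enf(τ) under v equals the arithmetic interpretation of τ under v, where interpretation sends τ+σ to ⟦τ⟧+⟦σ⟧, τ×σ to ⟦τ⟧·⟦σ⟧, the unit type to 1, and τ→σ to ⟦σ⟧^⟦τ⟧. -/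

import Mathlib

namespace ExpLog

-- Types generated by atoms, arrows, products and sums.
inductive Ty : Type
  | atom : ℕ → Ty
  | arr  : Ty → Ty → Ty
  | prod : Ty → Ty → Ty
  | sum  : Ty → Ty → Ty
  deriving Repr, DecidableEq
-- The mutually inductive grammar of exp-log normal forms:
-- conjunctive normal forms (CNF), disjunctive normal forms (DNF), and base types.
mutual
inductive CNF : Type
  | top : CNF
  | con : CNF → Base → CNF → CNF
  deriving Repr

inductive DNF : Type
  | two : CNF → CNF → DNF
  | dis : CNF → DNF → DNF
  deriving Repr

inductive Base : Type
  | prp : ℕ → Base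
  | bd  : DNF → Base
  deriving Repr
end

/-- Exp-log normal forms: either a CNF or a DNF. -/
inductive ENF : Type
  | cnf : CNF → ENF
  | dnf : DNF → ENF
  deriving Repr

/-- Flattening of `+`-associativity (auxiliary). -/
def nplus1 : DNF → ENF → DNF
  | .two c c0, .cnf c1 => .dis c (.two c0 c1)
  | .two c c0, .dnf d0 => .dis c (.dis c0 d0)
  | .dis c d0, e2 => .dis c (nplus1 d0 e2)

/-- Flattened n-ary sum of two ENFs. -/
def nplus : ENF → ENF → DNF
  | .cnf a, .cnf c => .two a c
  | .cnf a, .dnf d => .dis a d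
  | .dnf b, e2 => nplus1 b e2

/-- Flattened n-ary product of two CNFs. -/
def ntimes : CNF → CNF → CNF
  | .top, c2 => c2
  | .con c10 d c13, c2 => .con c10 d (ntimes c13 c2)

/-- Distributivity of a CNF over a DNF. -/
def distrib0 : CNF → DNF → ENF
  | c, .two c0 c1 => .dnf (.two (ntimes c c0) (ntimes c c1))
  | c, .dis c0 d0 =>
      .dnf (match distrib0 c d0 with
            | .cnf c1 => .two (ntimes c c0) c1
            | .dnf d1 => .dis (ntimes c c0) d1)

/-- Distributivity of a CNF over an ENF. -/
def distrib1 : CNF → ENF → ENF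
  | c, .cnf a => .cnf (ntimes c a)
  | c, .dnf b => distrib0 c b

/-- The exp-log rewriting `b^(c₁+⋯+cₙ) ⇝ b^c₁ ⋯ b^cₙ`. -/
def explog0 : Base → DNF → CNF
  | b, .two c1 c2 => ntimes (.con c1 b .top) (.con c2 b .top)
  | b, .dis c d3 => ntimes (.con c b .top) (explog0 b d3)

/-- The exp-log rewriting of `b^e` for an ENF exponent `e`. -/
def explog1 : Base → ENF → CNF
  | d, .cnf c => .con c d .top
  | d, .dnf d1 => explog0 d d1

/-- Distributivity of a DNF over an ENF. -/
def distribn : DNF → ENF → ENF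
  | .two c c0, e2 => .dnf (nplus (distrib1 c e2) (distrib1 c0 e2))
  | .dis c d0, e2 => .dnf (nplus (distrib1 c e2) (distribn d0 e2))

/-- Distributivity of an ENF over an ENF. -/
def distrib : ENF → ENF → ENF
  | .cnf a, e2 => distrib1 a e2
  | .dnf b, e2 => distribn b e2

/-- The exp-log rewriting of `c^{e₂}` (pointwise currying). -/
def explogn : CNF → ENF → CNF
  | .top, _ => .top
  | .con c1 d c2, e2 => ntimes (explog1 d (distrib1 c1 e2)) (explogn c2 e2)

/-- The CNF corresponding to an atomic type: `(1→p)×1`, identified with `p`. -/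
def p2c (p : ℕ) : CNF := .con .top (.prp p) .top

def b2c : Base → CNF
  | .prp p => p2c p
  | .bd d => .con .top (.bd d) .top

/-- Coercion of an ENF to a CNF. -/
def enf2cnf : ENF → CNF
  | .cnf c => c
  | .dnf d => b2c (.bd d)
/-- The structurally recursive exp-log normalization of a type. -/
def enf : Ty → ENF
  | .atom p => .cnf (p2c p)
  | .sum f0 f1 => .dnf (nplus (enf f0) (enf f1))
  | .prod f0 f1 => distrib (enf f0) (enf f1)
  | .arr f0 f1 => .cnf (explogn (enf2cnf (enf f1)) (enf f0))

-- The arithmetic interpretation of types under a valuation of the atoms.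
def interpTy (v : ℕ → ℕ) : Ty → ℕ
  | .atom p => v p
  | .arr a b => interpTy v b ^ interpTy v a
  | .prod a b => interpTy v a * interpTy v b
  | .sum a b => interpTy v a + interpTy v b

-- The arithmetic interpretation of exp-log normal forms
-- (the empty product, i.e. the unit type `CNF.top`, is interpreted by 1).
mutual
def interpC (v : ℕ → ℕ) : CNF → ℕ
  | .top => 1
  | .con c1 b c2 => interpB v b ^ interpC v c1 * interpC v c2

def interpD (v : ℕ → ℕ) : DNF → ℕ
  | .two c1 c2 => interpC v c1 + interpC v c2
  | .dis c d => interpC v c + interpD v d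

def interpB (v : ℕ → ℕ) : Base → ℕ
  | .prp p => v p
  | .bd d => interpD v d
end

def interpE (v : ℕ → ℕ) : ENF → ℕ
  | .cnf c => interpC v c
  | .dnf d => interpD v d

/-! Each auxiliary function called by `enf` realises one high-school identity on the nose
(`nplus` is `+`, `ntimes` and the `distrib*` are `·`, the `explog*` are exponentiation), so
each preserves the interpretation; the theorem follows by induction on the type. -/

section Interpretation

variable (v : ℕ → ℕ)

@[simp] lemma interpE_cnf (c : CNF) : interpE v (.cnf c) = interpC v c := rfl
@[simp] lemma interpE_dnf (d : DNF) : interpE v (.dnf d) = interpD v d := rfl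

lemma interpD_nplus1 (d : DNF) (e : ENF) :
    interpD v (nplus1 d e) = interpD v d + interpE v e := by
  induction d, e using nplus1.induct <;> simp [nplus1, interpD, add_assoc, *]

lemma interpD_nplus (e₁ e₂ : ENF) :
    interpD v (nplus e₁ e₂) = interpE v e₁ + interpE v e₂ := by
  cases e₁ <;> cases e₂ <;> simp [nplus, interpD, interpD_nplus1]

lemma interpC_ntimes (c₁ c₂ : CNF) :
    interpC v (ntimes c₁ c₂) = interpC v c₁ * interpC v c₂ := by
  induction c₁, c₂ using ntimes.induct <;> simp [ntimes, interpC, mul_assoc, *]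

lemma interpE_distrib0 (c : CNF) (d : DNF) :
    interpE v (distrib0 c d) = interpC v c * interpD v d := by
  induction c, d using distrib0.induct with
  | case1 c c₀ c₁ => simp [distrib0, interpD, interpC_ntimes, mul_add]
  | case2 c c₀ d₀ ih =>
    rw [distrib0]
    cases h : distrib0 c d₀ <;> rw [h] at ih <;>
      simp only [interpE_cnf, interpE_dnf, interpD, interpC_ntimes] at ih ⊢ <;>
      rw [ih, mul_add]

lemma interpE_distrib1 (c : CNF) (e : ENF) :
    interpE v (distrib1 c e) = interpC v c * interpE v e := by
  cases e <;> simp [distrib1, interpC_ntimes, interpE_distrib0]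

lemma interpE_distribn (d : DNF) (e : ENF) :
    interpE v (distribn d e) = interpD v d * interpE v e := by
  induction d, e using distribn.induct <;>
    simp [distribn, interpD_nplus, interpE_distrib1, interpD, add_mul, *]

lemma interpE_distrib (e₁ e₂ : ENF) :
    interpE v (distrib e₁ e₂) = interpE v e₁ * interpE v e₂ := by
  cases e₁ <;> simp [distrib, interpE_distrib1, interpE_distribn]

lemma interpC_explog0 (b : Base) (d : DNF) :
    interpC v (explog0 b d) = interpB v b ^ interpD v d := by
  induction b, d using explog0.induct <;>
    simp [explog0, interpC_ntimes, interpC, interpD, pow_add, *]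

lemma interpC_explog1 (b : Base) (e : ENF) :
    interpC v (explog1 b e) = interpB v b ^ interpE v e := by
  cases e <;> simp [explog1, interpC, interpC_explog0]

lemma interpC_explogn (c : CNF) (e : ENF) :
    interpC v (explogn c e) = interpC v c ^ interpE v e := by
  induction c, e using explogn.induct with
  | case1 e => simp [explogn, interpC]
  | case2 c₁ b c₂ e ih =>
    -- `(b ^ c₁ * c₂) ^ e = b ^ (c₁ * e) * c₂ ^ e`
    simp [explogn, interpC_ntimes, interpC_explog1, interpE_distrib1, interpC, ih,
      mul_pow, ← pow_mul]

lemma interpC_enf2cnf (e : ENF) : interpC v (enf2cnf e) = interpE v e := by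
  cases e <;> simp [enf2cnf, b2c, interpC, interpB]

end Interpretation

/-- For every valuation assigning a positive natural number to
each atomic type, the arithmetic interpretation of `enf τ` equals that of `τ`. -/
theorem interp_enf_eq (τ : Ty) (v : ℕ → ℕ) (hv : ∀ p : ℕ, 0 < v p) :
    interpE v (enf τ) = interpTy v τ := by
  induction τ with
  | atom p => simp [enf, p2c, interpC, interpB, interpTy]
  | arr σ ρ ihσ ihρ => simp [enf, interpC_explogn, interpC_enf2cnf, ihσ, ihρ, interpTy]
  | prod σ ρ ihσ ihρ => simp [enf, interpE_distrib, ihσ, ihρ, interpTy]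
  | sum σ ρ ihσ ihρ => simp [enf, interpD_nplus, ihσ, ihρ, interpTy]

end ExpLog
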